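/- Under the hypotheses of the cell problem (a_{ij} symmetric, Y-periodic, uniformly elliptic with constant α; χ^j the unique solution in H^1_per(Y*)/ℝ of a(χ^j, v) = l_j(v) for all v), define the homogenized coefficients q_{ij} = ∫_{Y*} a_{ij}(y) dy − Σ_l ∫_{Y*} a_{il}(y) ∂χ^j/∂y_l dy. Then the matrix (q_{ij}) is symmetric: q_{ij} = q_{ji} for all 1 ≤ i,j ≤ N. -/

import Mathlib

noncomputable section
open MeasureTheory Filter
open scoped RealInnerProductSpace

abbrev Euc (N : ℕ) := EuclideanSpace ℝ (Fin N)

/-- The integer vector `k` viewed as a point of `ℝ^N`. -/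
def intVec (N : ℕ) (k : Fin N → ℤ) : Euc N :=
  (EuclideanSpace.equiv (Fin N) ℝ).symm (fun i => (k i : ℝ))

/-- The unit cell `Y = (0,1)^N`. -/
def Ycube (N : ℕ) : Set (Euc N) := {y | ∀ i, y i ∈ Set.Ioo (0:ℝ) 1}

/-- `Y* = Y \ T`, the perforated reference cell. -/
def Ystar (N : ℕ) (T : Set (Euc N)) : Set (Euc N) := Ycube N \ T

/-- A representative of an element of `H^1_per(Y*)/ℝ`: a `Y`-periodic function with a
gradient on `Y*`, zero mean over `Y*`, and square-integrable gradient. -/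
structure PerH1 (N : ℕ) (T : Set (Euc N)) where
  u : Euc N → ℝ
  Du : Euc N → Euc N
  periodic : ∀ (y : Euc N) (k : Fin N → ℤ), u (y + intVec N k) = u y
  grad : ∀ y ∈ Ystar N T, HasGradientAt u (Du y) y
  meanZero : ∫ y in Ystar N T, u y = 0
  u_int : Integrable u (volume.restrict (Ystar N T))
  grad_sq_int : Integrable (fun y => ‖Du y‖ ^ 2) (volume.restrict (Ystar N T))

/-- The bilinear form `a(u,v) = Σ_{ij} ∫_{Y*} a_{ij} ∂u/∂y_j ∂v/∂y_i dy`. -/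
def aForm {N : ℕ} {T : Set (Euc N)} (a : Fin N → Fin N → Euc N → ℝ)
    (p q : PerH1 N T) : ℝ :=
  ∑ i, ∑ j, ∫ y in Ystar N T, a i j y * (p.Du y) j * (q.Du y) i

/-- The linear functional `l_j(v) = Σ_k ∫_{Y*} a_{kj} ∂v/∂y_k dy`. -/
def lForm {N : ℕ} {T : Set (Euc N)} (a : Fin N → Fin N → Euc N → ℝ)
    (j : Fin N) (v : PerH1 N T) : ℝ :=
  ∑ k, ∫ y in Ystar N T, a k j y * (v.Du y) k

/-- The gradient (Hilbert) norm on `H^1_per(Y*)/ℝ`. -/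
def gradNorm {N : ℕ} {T : Set (Euc N)} (p : PerH1 N T) : ℝ :=
  (∫ y in Ystar N T, ‖p.Du y‖ ^ 2) ^ (1/2 : ℝ)

section SymmetricCoefficients

variable {N : ℕ} {T : Set (Euc N)} {a : Fin N → Fin N → Euc N → ℝ}

theorem aForm_comm (hsym : ∀ i j y, a i j y = a j i y) (p q : PerH1 N T) :
    aForm a p q = aForm a q p := by
  unfold aForm
  rw [Finset.sum_comm]
  refine Finset.sum_congr rfl fun i _ => Finset.sum_congr rfl fun j _ => ?_
  congr 1
  funext y
  rw [hsym]
  ring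

theorem lForm_eq_of_symm (hsym : ∀ i j y, a i j y = a j i y) (j : Fin N) (v : PerH1 N T) :
    lForm a j v = ∑ l, ∫ y in Ystar N T, a j l y * (v.Du y) l := by
  simp only [lForm, hsym _ j]

/-- Testing the cell problem for `χ^j` against `χ^i` turns the corrector term of `q_{ij}` into
`a(χ^i, χ^j)`. -/
theorem sum_integral_mul_Du_eq_aForm (hsym : ∀ i j y, a i j y = a j i y)
    {χ : Fin N → PerH1 N T} (hχ : ∀ j (v : PerH1 N T), aForm a (χ j) v = lForm a j v)
    (i j : Fin N) :
    ∑ l, ∫ y in Ystar N T, a i l y * ((χ j).Du y) l = aForm a (χ i) (χ j) := by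
  rw [hχ, lForm_eq_of_symm hsym]

end SymmetricCoefficients

theorem statement2_general (N : ℕ) (T : Set (Euc N))
    (a : Fin N → Fin N → Euc N → ℝ)
    (hsym : ∀ i j y, a i j y = a j i y)
    (χ : Fin N → PerH1 N T)
    (hχ : ∀ j (v : PerH1 N T), aForm a (χ j) v = lForm a j v)
    (q : Fin N → Fin N → ℝ)
    (hq : ∀ i j, q i j = (∫ y in Ystar N T, a i j y)
        - ∑ l, ∫ y in Ystar N T, a i l y * ((χ j).Du y) l) :
    ∀ i j, q i j = q j i := by
  intro i j
  rw [hq, hq, sum_integral_mul_Du_eq_aForm hsym hχ, sum_integral_mul_Du_eq_aForm hsym hχ,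
    aForm_comm hsym]
  simp only [hsym i j]

/-- the homogenized coefficients
`q_{ij} = ∫_{Y*} a_{ij} dy − Σ_l ∫_{Y*} a_{il} ∂χ^j/∂y_l dy` form a symmetric matrix. -/
theorem statement2 (N : ℕ) (T : Set (Euc N))
    (hTcpt : IsCompact T) (hTY : T ⊆ Ycube N) (hTint : (interior T).Nonempty)
    (a : Fin N → Fin N → Euc N → ℝ) (α : ℝ) (hα : 0 < α)
    (hmeas : ∀ i j, Measurable (a i j))
    (hbdd : ∃ M : ℝ, ∀ i j y, |a i j y| ≤ M)
    (hsym : ∀ i j y, a i j y = a j i y)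
    (hper : ∀ i j (y : Euc N) (k : Fin N → ℤ), a i j (y + intVec N k) = a i j y)
    (hell : ∀ (y : Euc N) (ξ : Euc N), α * ‖ξ‖ ^ 2 ≤ ∑ i, ∑ j, a i j y * ξ j * ξ i)
    (χ : Fin N → PerH1 N T)
    (hχ : ∀ j (v : PerH1 N T), aForm a (χ j) v = lForm a j v)
    (q : Fin N → Fin N → ℝ)
    (hq : ∀ i j, q i j = (∫ y in Ystar N T, a i j y)
        - ∑ l, ∫ y in Ystar N T, a i l y * ((χ j).Du y) l) :
    ∀ i j, q i j = q j i :=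
  statement2_general N T a hsym χ hχ q hq
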